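/- Let α₀, α₁ ∈ ℂ with 2α₀ + α₁ = 1, U ⊆ ℂ open, and let (x, y, z, w, q) be differentiable functions on U solving system (11) that additionally satisfy the first-integral relation y = x + 3zw − (3/2)q² + (3/2)t on U. Then the functions (q₁, p₁, q₂, p₂) := (z, x, w, q) solve system (3) with parameter α = (6α₀ − 1)/2 on U; i.e., elimination of y from system (11) yields the Hamiltonian system (3). -/

import Mathlib

/-- `(x,y,z,w,q)` solves system (11) with parameters `α₀, α₁` on `U`:
`x' = -2xz - 3α₀`, `y' = yz + (3/2)α₁`, `z' = z² + q`,
`w' = -zw + (2/3)x + (1/3)y`, `q' = w`. -/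
def SolvesSys11 (a0 a1 : ℂ) (U : Set ℂ) (x y z w q : ℂ → ℂ) : Prop :=
  ∀ t ∈ U,
    HasDerivAt x (-2 * x t * z t - 3 * a0) t ∧
    HasDerivAt y (y t * z t + (3/2) * a1) t ∧
    HasDerivAt z (z t ^ 2 + q t) t ∧
    HasDerivAt w (-(z t) * w t + (2/3) * x t + (1/3) * y t) t ∧
    HasDerivAt q (w t) t

/-- `(q₁,p₁,q₂,p₂)` solves system (3) with parameter `α` on `U`. -/
def SolvesSys3 (α : ℂ) (U : Set ℂ) (q1 p1 q2 p2 : ℂ → ℂ) : Prop :=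
  ∀ t ∈ U,
    HasDerivAt q1 (q1 t ^ 2 + p2 t) t ∧
    HasDerivAt p1 (-2 * q1 t * p1 t - α - 1/2) t ∧
    HasDerivAt q2 (-(1/2) * p2 t ^ 2 + p1 t + t / 2) t ∧
    HasDerivAt p2 (q2 t) t

theorem stmt10_general (a0 a1 : ℂ) (U : Set ℂ)
    (x y z w q : ℂ → ℂ) (h : SolvesSys11 a0 a1 U x y z w q)
    (hy : ∀ t ∈ U, y t = x t + 3 * z t * w t - (3/2) * q t ^ 2 + (3/2) * t) :
    SolvesSys3 ((6 * a0 - 1) / 2) U z x w q := by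
  intro t ht
  obtain ⟨hx, -, hz, hw, hq⟩ := h t ht
  refine ⟨hz, hx.congr_deriv (by ring), hw.congr_deriv ?_, hq⟩
  rw [hy t ht]
  ring

/-- Elimination of `y` from system (11) by means of the first
integral `y = x + 3zw - (3/2)q² + (3/2)t` yields system (3):
`(q₁,p₁,q₂,p₂) := (z,x,w,q)` solves system (3) with `α = (6α₀ - 1)/2`. -/
theorem stmt10 (a0 a1 : ℂ) (hrel : 2 * a0 + a1 = 1) (U : Set ℂ) (hU : IsOpen U)
    (x y z w q : ℂ → ℂ) (h : SolvesSys11 a0 a1 U x y z w q)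
    (hy : ∀ t ∈ U, y t = x t + 3 * z t * w t - (3/2) * q t ^ 2 + (3/2) * t) :
    SolvesSys3 ((6 * a0 - 1) / 2) U z x w q :=
  stmt10_general a0 a1 U x y z w q h hy
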